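/- arXiv:2204.09421 — 2 statements merged into one kernel-verified Lean document; each statement's English description precedes it below -/
import Mathlib

section
/- Let p be a proposition. If A is a set such that the truth of p implies A is a subsingleton ('p-sealed'), and B is a set such that the map B → (p → B) is a bijection ('p-transparent'), then every function f : A → B is weakly constant: f x = f y for all x, y. -/
/-- If `A` is `p`-sealed and `B` is `p`-transparent, then every function
`f : A → B` is weakly constant. -/
theorem sealed_to_transparent_weakly_constant {p : Prop} {A B : Type*}
    (hA : p → Subsingleton A)
    (hB : Function.Bijective (fun (b : B) => fun (_ : p) => b))
    (f : A → B) : ∀ x y : A, f x = f y := by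
  intro x y
  apply hB.injective
  funext h
  have := hA h
  simp [Subsingleton.elim x y]
end

section
/- Fix a proposition p. If A is p-sealed and B is p-transparent, then any partial function u : A → Option B (or more generally A → Part B) is partially constant: for all x y : A with u x and u y both defined, u x = u y. -/
/-- If `A` is `p`-sealed and `B` is `p`-transparent, then any partial function
`u : A → Part B` is partially constant. -/
theorem sealed_to_transparent_partially_constant {p : Prop} {A B : Type*}
    (hA : p → Subsingleton A)
    (hB : Function.Bijective (fun (b : B) => fun (_ : p) => b))
    (u : A → Part B) :
    ∀ x y : A, (u x).Dom → (u y).Dom → u x = u y := by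
  intro x y hx hy
  have key : (u x).get hx = (u y).get hy := by
    apply hB.injective
    funext hp
    have : x = y := (hA hp).elim x y
    subst this
    rfl
  exact Part.ext' (iff_of_true hx hy) (fun _ _ => key)
end
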